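/- arXiv:2108.00258 — 2 statements merged into one kernel-verified Lean document; each statement's English description precedes it below -/
import Mathlib

section
/- Suppose h ∈ C(𝔻, ℂ) ∩ W^{1,2}(𝔻, ℂ) and h − f ∈ W^{1,2}_0(𝔻, ℂ) for some f ∈ C(closure(𝔻), ℂ). Let A ⊂ ℂ be a set with closure(A) ∩ f(𝕊¹) = ∅, and let C be a connected component of h⁻¹(A). Then closure(C) ⊂ 𝔻. -/
open MeasureTheory Metric Set Filter Topology

noncomputable section

/-- The open unit disk in the complex plane. -/
def unitDisk : Set ℂ := Metric.ball 0 1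

/-- The unit circle in the complex plane. -/
def unitCircle : Set ℂ := Metric.sphere 0 1

/-- `g` is a distributional (weak) partial derivative of `h` on `Ω` in the direction `v`:
integration by parts against smooth test functions compactly supported in `Ω`. -/
def HasWeakPartialDeriv (Ω : Set ℂ) (h g : ℂ → ℂ) (v : ℂ) : Prop :=
  ∀ φ : ℂ → ℝ, ContDiff ℝ (⊤ : ℕ∞) φ → HasCompactSupport φ → tsupport φ ⊆ Ω →
    ∫ z in Ω, (fderiv ℝ φ z v) • h z = - ∫ z in Ω, φ z • g z

/-- Membership in the Sobolev space `W^{1,2}(Ω, ℂ)`: the map and both weak partial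
derivatives are in `L²(Ω)`. -/
def MemW12 (Ω : Set ℂ) (h : ℂ → ℂ) : Prop :=
  MemLp h 2 (volume.restrict Ω) ∧
  ∃ gx gy : ℂ → ℂ, HasWeakPartialDeriv Ω h gx 1 ∧ HasWeakPartialDeriv Ω h gy Complex.I ∧
    MemLp gx 2 (volume.restrict Ω) ∧ MemLp gy 2 (volume.restrict Ω)

/-- Membership in `W^{1,2}_loc(Ω, ℂ)`. -/
def MemW12loc (Ω : Set ℂ) (h : ℂ → ℂ) : Prop :=
  ∀ z ∈ Ω, ∃ ε > 0, Metric.ball z ε ⊆ Ω ∧ MemW12 (Metric.ball z ε) h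

/-- Membership in `W^{1,2}_0(Ω, ℂ)`: the closure of smooth compactly supported maps in
the `W^{1,2}`-norm, expressed via an approximating sequence. -/
def MemW120 (Ω : Set ℂ) (h : ℂ → ℂ) : Prop :=
  ∃ gx gy : ℂ → ℂ,
    HasWeakPartialDeriv Ω h gx 1 ∧ HasWeakPartialDeriv Ω h gy Complex.I ∧
    MemLp h 2 (volume.restrict Ω) ∧ MemLp gx 2 (volume.restrict Ω) ∧
    MemLp gy 2 (volume.restrict Ω) ∧
    ∃ φ : ℕ → ℂ → ℂ,
      (∀ n, ContDiff ℝ (⊤ : ℕ∞) (φ n) ∧ HasCompactSupport (φ n) ∧ tsupport (φ n) ⊆ Ω) ∧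
      Tendsto (fun n => eLpNorm (fun z => h z - φ n z) 2 (volume.restrict Ω)) atTop (nhds 0) ∧
      Tendsto (fun n => eLpNorm (fun z => gx z - fderiv ℝ (φ n) z 1) 2 (volume.restrict Ω))
        atTop (nhds 0) ∧
      Tendsto (fun n => eLpNorm (fun z => gy z - fderiv ℝ (φ n) z Complex.I) 2
        (volume.restrict Ω)) atTop (nhds 0)

/-- The Wirtinger derivative `∂h/∂z` computed from the partial derivatives
`gx = ∂h/∂x` and `gy = ∂h/∂y`. -/
def wirtZ (gx gy : ℂ → ℂ) (z : ℂ) : ℂ := (gx z - Complex.I * gy z) / 2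

/-- The Wirtinger derivative `∂h/∂z̄` computed from the partial derivatives
`gx = ∂h/∂x` and `gy = ∂h/∂y`. -/
def wirtZBar (gx gy : ℂ → ℂ) (z : ℂ) : ℂ := (gx z + Complex.I * gy z) / 2

/-- The Jacobian determinant `J_h = |h_z|² - |h_z̄|²` computed from the partial
derivatives `gx = ∂h/∂x` and `gy = ∂h/∂y`. -/
def jacDet (gx gy : ℂ → ℂ) (z : ℂ) : ℝ :=
  ‖wirtZ gx gy z‖ ^ 2 - ‖wirtZBar gx gy z‖ ^ 2

/-- `J_h ≥ 0` almost everywhere on `Ω` (with respect to a weak gradient of `h`). -/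
def JacNonnegAE (Ω : Set ℂ) (h : ℂ → ℂ) : Prop :=
  ∃ gx gy : ℂ → ℂ, HasWeakPartialDeriv Ω h gx 1 ∧ HasWeakPartialDeriv Ω h gy Complex.I ∧
    ∀ᵐ z ∂(volume.restrict Ω), 0 ≤ jacDet gx gy z

/-- The Wirtinger derivative `∂ψ/∂z̄` of a (smooth) map `ψ`. -/
def dzbar (ψ : ℂ → ℂ) (z : ℂ) : ℂ :=
  (fderiv ℝ ψ z 1 + Complex.I * fderiv ℝ ψ z Complex.I) / 2

/-- `h` satisfies the Hopf-Laplace equation `∂_z̄ (h_z ⬝ conj h_z̄) = 0` on `Ω` in the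
sense of distributions. -/
def SatisfiesHopfLaplace (Ω : Set ℂ) (h : ℂ → ℂ) : Prop :=
  ∃ gx gy : ℂ → ℂ, HasWeakPartialDeriv Ω h gx 1 ∧ HasWeakPartialDeriv Ω h gy Complex.I ∧
    ∀ ψ : ℂ → ℂ, ContDiff ℝ (⊤ : ℕ∞) ψ → HasCompactSupport ψ → tsupport ψ ⊆ Ω →
      ∫ z in Ω, (wirtZ gx gy z * (starRingEnd ℂ) (wirtZBar gx gy z)) * dzbar ψ z = 0

/-- `f` restricts to a homeomorphism of `A` onto `B`. -/
def IsHomeoOn (f : ℂ → ℂ) (A B : Set ℂ) : Prop :=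
  ContinuousOn f A ∧ Set.BijOn f A B ∧
    ∃ g : ℂ → ℂ, ContinuousOn g B ∧ (∀ x ∈ A, g (f x) = x) ∧ ∀ y ∈ B, f (g y) = y

/-- A Jordan domain: a bounded, simply connected planar domain whose boundary is a
Jordan curve (a homeomorphic image of the circle). -/
def IsJordanDomain (X : Set ℂ) : Prop :=
  IsOpen X ∧ Bornology.IsBounded X ∧ IsConnected X ∧ SimplyConnectedSpace ↥X ∧
    ∃ φ : ℂ → ℂ, ContinuousOn φ unitCircle ∧ Set.InjOn φ unitCircle ∧
      φ '' unitCircle = frontier X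

/-- A domain is Lipschitz if its boundary is locally the graph of a Lipschitz function
(up to a rigid motion of the plane). -/
def IsLipschitzDomain (Y : Set ℂ) : Prop :=
  ∀ p ∈ frontier Y, ∃ (e : ℂ ≃ᵢ ℂ) (r : ℝ) (L : NNReal) (φ : ℝ → ℝ),
    0 < r ∧ LipschitzWith L φ ∧ e p = 0 ∧
    ∀ z ∈ Metric.ball (0 : ℂ) r, (e.symm z ∈ Y ↔ φ z.re < z.im)

/-- `h` satisfies the Lusin (N) condition on `Ω`: sets of measure zero are mapped to
sets of measure zero. -/
def LusinN (Ω : Set ℂ) (h : ℂ → ℂ) : Prop :=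
  ∀ E ⊆ Ω, volume E = 0 → volume (h '' E) = 0

/-- The pointwise Jacobian determinant of a (smooth) map `g : ℂ → ℂ` viewed as a map
of the plane. -/
def realJac (g : ℂ → ℂ) (z : ℂ) : ℝ :=
  (fderiv ℝ g z 1).re * (fderiv ℝ g z Complex.I).im -
    (fderiv ℝ g z 1).im * (fderiv ℝ g z Complex.I).re

/-- `d` is the Brouwer degree of `h` at the point `y` with respect to the bounded open
set `U` (`h` continuous on `closure U`, `y ∉ h(∂U)`), characterized analytically: for
every smooth map `g` uniformly close to `h` on `closure U` and every smooth probability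
density `ψ` concentrated near `y`, the integral `∫_U ψ(g) J_g` equals `d`. -/
def HasDegreeAt (h : ℂ → ℂ) (y : ℂ) (U : Set ℂ) (d : ℤ) : Prop :=
  ∃ ε > 0, (∀ z ∈ frontier U, ε ≤ dist y (h z)) ∧
    ∀ g : ℂ → ℂ, ContDiff ℝ (⊤ : ℕ∞) g → (∀ z ∈ closure U, dist (g z) (h z) < ε / 2) →
      ∀ ψ : ℂ → ℝ, ContDiff ℝ (⊤ : ℕ∞) ψ → HasCompactSupport ψ →
        tsupport ψ ⊆ Metric.ball y (ε / 2) → (∫ w, ψ w) = 1 →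
        (∫ z in U, ψ (g z) * realJac g z) = (d : ℝ)

open Classical in
/-- The Dirichlet energy `∫_Ω |Dh|²` of a Sobolev map, computed from a (choice of)
weak gradient; weak gradients are a.e. unique, so the value does not depend on the
choice. -/
def dirichletEnergy (Ω : Set ℂ) (h : ℂ → ℂ) : ℝ :=
  if hW : ∃ p : (ℂ → ℂ) × (ℂ → ℂ),
      HasWeakPartialDeriv Ω h p.1 1 ∧ HasWeakPartialDeriv Ω h p.2 Complex.I then
    ∫ z in Ω, (‖hW.choose.1 z‖ ^ 2 + ‖hW.choose.2 z‖ ^ 2)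
  else 0

/-- The conformal capacity of the condenser `(K, U)`. -/
def conformalCapacity (K U : Set ℂ) : ℝ :=
  sInf {E : ℝ | ∃ u : ℂ → ℝ, ContDiff ℝ (⊤ : ℕ∞) u ∧ HasCompactSupport u ∧
    tsupport u ⊆ U ∧ (∀ z ∈ K, 1 ≤ u z) ∧ E = ∫ z in U, ‖fderiv ℝ u z‖ ^ 2}

/-- The `K`-oscillation property of a map `H` on an open set `U`. -/
def KOscillationProperty (K : ℝ) (U : Set ℂ) (H : ℂ → ℂ) : Prop :=
  ∀ z ∈ U, ∀ᵐ r ∂(volume.restrict (Set.Ioo (0 : ℝ) (Metric.infDist z Uᶜ))),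
    EMetric.diam (H '' Metric.ball z r) ≤
      ENNReal.ofReal K * EMetric.diam (H '' Metric.sphere z r)

/-- The set of connected components of a set `A`. -/
def componentsIn (A : Set ℂ) : Set (Set ℂ) := {C | ∃ x ∈ A, C = connectedComponentIn A x}

/-- There exist an open ball `B` and a nonempty connected component `U` of `h⁻¹(B)`
(in the unit disk) on which the Jacobian of `h` vanishes almost everywhere. -/
def HasZeroJacComponent (h : ℂ → ℂ) : Prop :=
  ∃ (y : ℂ) (r : ℝ) (x : ℂ) (gx gy : ℂ → ℂ), 0 < r ∧
    x ∈ unitDisk ∩ h ⁻¹' Metric.ball y r ∧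
    HasWeakPartialDeriv unitDisk h gx 1 ∧ HasWeakPartialDeriv unitDisk h gy Complex.I ∧
    ∀ᵐ z ∂(volume.restrict (connectedComponentIn (unitDisk ∩ h ⁻¹' Metric.ball y r) x)),
      jacDet gx gy z = 0

/-- The real interval `(a, b)` with extended-real endpoints. -/
def erealIoo (a b : EReal) : Set ℝ := {t : ℝ | a < (t : EReal) ∧ (t : EReal) < b}

/-- The filter describing `t → c` (where `c` is an endpoint, possibly infinite) within
the interval `(a, b)`. -/
def endpointFilter (a b c : EReal) : Filter ℝ :=
  Filter.comap (fun t : ℝ => (t : EReal)) (nhdsWithin c (Set.Ioo a b))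

/-- `γ : (a,b) → Ω` is a vertical arc of the quadratic differential `g dz ⊗ dz`:
a smooth curve with `g(γ(t))·γ'(t)² < 0` everywhere. -/
def IsVerticalArcOn (g : ℂ → ℂ) (Ω : Set ℂ) (a b : EReal) (γ : ℝ → ℂ) : Prop :=
  (∀ t ∈ erealIoo a b, γ t ∈ Ω) ∧ ContDiffOn ℝ (⊤ : ℕ∞) γ (erealIoo a b) ∧
    ∀ t ∈ erealIoo a b, ∃ c : ℝ, c < 0 ∧ g (γ t) * (deriv γ t) ^ 2 = (c : ℂ)

/-- `γ : (a,b) → Ω` is a horizontal arc of the quadratic differential `g dz ⊗ dz`: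
a smooth curve with `g(γ(t))·γ'(t)² > 0` everywhere. -/
def IsHorizontalArcOn (g : ℂ → ℂ) (Ω : Set ℂ) (a b : EReal) (γ : ℝ → ℂ) : Prop :=
  (∀ t ∈ erealIoo a b, γ t ∈ Ω) ∧ ContDiffOn ℝ (⊤ : ℕ∞) γ (erealIoo a b) ∧
    ∀ t ∈ erealIoo a b, ∃ c : ℝ, 0 < c ∧ g (γ t) * (deriv γ t) ^ 2 = (c : ℂ)

/-- A vertical trajectory: a maximal vertical arc. -/
def IsVerticalTrajectory (g : ℂ → ℂ) (Ω : Set ℂ) (a b : EReal) (γ : ℝ → ℂ) : Prop :=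
  IsVerticalArcOn g Ω a b γ ∧
    ∀ (a' b' : EReal) (γ' : ℝ → ℂ), IsVerticalArcOn g Ω a' b' γ' →
      a' ≤ a → b ≤ b' → Set.EqOn γ γ' (erealIoo a b) → a' = a ∧ b' = b

/-- A horizontal trajectory: a maximal horizontal arc. -/
def IsHorizontalTrajectory (g : ℂ → ℂ) (Ω : Set ℂ) (a b : EReal) (γ : ℝ → ℂ) : Prop :=
  IsHorizontalArcOn g Ω a b γ ∧
    ∀ (a' b' : EReal) (γ' : ℝ → ℂ), IsHorizontalArcOn g Ω a' b' γ' →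
      a' ≤ a → b ≤ b' → Set.EqOn γ γ' (erealIoo a b) → a' = a ∧ b' = b

/-- The arc `γ` exits a critical point (a zero of the coefficient `g`) of the
quadratic differential at one of its endpoints. -/
def ExitsCriticalPoint (g : ℂ → ℂ) (Ω : Set ℂ) (a b : EReal) (γ : ℝ → ℂ) : Prop :=
  ∃ z ∈ Ω, g z = 0 ∧
    (Tendsto γ (endpointFilter a b a) (nhds z) ∨ Tendsto γ (endpointFilter a b b) (nhds z))

/-!
Suppose a point `p ∈ 𝕊¹` lies in the closure of the component `C`. Near `p` the boundary map
`f` stays more than `δ` away from `A`, while `h` maps `C` into `A`; so `|h - f| > δ` on an open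
set `V ⊆ 𝔻` which, `C` being connected, meets every small circle `∂B(p, s)`.
A smooth `ψ` supported in `𝔻` vanishes somewhere on each such circle, hence
`|ψ|² ≤ 2π s² ∫ |Dψ|² dθ` along it, and if `|ψ| ≥ δ` at a point of the circle then the energy
`s ∫ |Dψ|² dθ` of `ψ` on it is at least `δ² / (2π s)`, which is not integrable in `s`. Applied
to smooth compactly supported approximants of `h - f` converging a.e., Fatou's lemma contradicts
the boundedness of their Dirichlet energies.
-/

open scoped Real ENNReal Interval
open Complex

theorem ContinuousLinearMap.opNorm_le_norm_apply_one_add_norm_apply_I {E : Type*}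
    [NormedAddCommGroup E] [NormedSpace ℝ E] (L : ℂ →L[ℝ] E) : ‖L‖ ≤ ‖L 1‖ + ‖L I‖ := by
  refine L.opNorm_le_bound (by positivity) fun z => ?_
  calc ‖L z‖ = ‖z.re • L 1 + z.im • L I‖ := by
        rw [← L.map_smul, ← L.map_smul, ← map_add, real_smul, real_smul, mul_one, re_add_im]
    _ ≤ |z.re| * ‖L 1‖ + |z.im| * ‖L I‖ := by
        simpa only [norm_smul, Real.norm_eq_abs] using norm_add_le (z.re • L 1) (z.im • L I)
    _ ≤ (‖L 1‖ + ‖L I‖) * ‖z‖ := by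
        nlinarith [abs_re_le_norm z, abs_im_le_norm z, norm_nonneg (L 1), norm_nonneg (L I)]

theorem norm_circleMap_arg (p : ℂ) {s : ℝ} (hs : 0 ≤ s) : ‖circleMap p s p.arg‖ = ‖p‖ + s := by
  have hp : (‖p‖ : ℂ) * exp (p.arg * I) = p := norm_mul_exp_arg_mul_I p
  have h : circleMap p s p.arg = ((‖p‖ + s : ℝ) : ℂ) * exp (p.arg * I) := by
    rw [circleMap, ofReal_add, add_mul, hp]
  rw [h, norm_mul, norm_exp_ofReal_mul_I, mul_one, norm_real, Real.norm_of_nonneg (by positivity)]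

theorem circleMap_arg_sub_of_mem_sphere {p z : ℂ} {s : ℝ} (hz : z ∈ sphere p s) :
    circleMap p s (z - p).arg = z := by
  rw [mem_sphere_iff_norm] at hz
  rw [circleMap, ← hz, norm_mul_exp_arg_mul_I, add_sub_cancel]

theorem IsPreconnected.inter_sphere_nonempty {X : Type*} [PseudoMetricSpace X] {C : Set X}
    (hC : IsPreconnected C) {x p : X} (hx : x ∈ C) (hp : p ∈ closure C) {s : ℝ} (hs : 0 < s)
    (hsx : s ≤ dist x p) : (C ∩ sphere p s).Nonempty := by
  obtain ⟨a, haC, hap⟩ := Metric.mem_closure_iff.mp hp s hs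
  obtain ⟨z, hzC, hz⟩ := hC.intermediate_value haC hx
    (continuous_id.dist continuous_const).continuousOn ⟨(dist_comm p a ▸ hap).le, hsx⟩
  exact ⟨z, hzC, hz⟩

theorem eventually_lt_dist_of_notMem_closure {X Y : Type*} [TopologicalSpace X]
    [PseudoMetricSpace Y] {f : X → Y} {S : Set X} {p : X} (hf : ContinuousWithinAt f S p)
    {A : Set Y} (hfp : f p ∉ closure A) :
    ∃ δ > 0, ∀ᶠ z in 𝓝[S] p, ∀ a ∈ A, δ < dist a (f z) := by
  obtain ⟨ε, hε, hA⟩ : ∃ ε > 0, ∀ a ∈ A, ε ≤ dist (f p) a := by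
    simpa [Metric.mem_closure_iff] using hfp
  refine ⟨ε / 2, half_pos hε, ?_⟩
  filter_upwards [Metric.tendsto_nhds.mp hf (ε / 2) (half_pos hε)] with z hz a ha
  linarith [hA a ha, dist_triangle (f p) (f z) a, dist_comm a (f z), dist_comm (f z) (f p)]

theorem lintegral_sq_le_measure_univ_mul {α : Type*} [MeasurableSpace α] (μ : Measure α)
    {f : α → ℝ≥0∞} (hf : AEMeasurable f μ) :
    (∫⁻ a, f a ∂μ) ^ 2 ≤ μ univ * ∫⁻ a, f a ^ 2 ∂μ := by
  have h := ENNReal.lintegral_mul_le_Lp_mul_Lq μ Real.HolderConjugate.two_two hf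
    (aemeasurable_const (b := (1 : ℝ≥0∞)))
  simp only [Pi.mul_apply, mul_one, lintegral_const, one_pow, one_mul, ENNReal.rpow_two] at h
  calc (∫⁻ a, f a ∂μ) ^ 2 ≤ ((∫⁻ a, f a ^ 2 ∂μ) ^ (1 / 2 : ℝ) * μ univ ^ (1 / 2 : ℝ)) ^ 2 := by
        gcongr
    _ = μ univ * ∫⁻ a, f a ^ 2 ∂μ := by
        rw [mul_pow, ← ENNReal.rpow_natCast, ← ENNReal.rpow_natCast (μ univ ^ _),
          ← ENNReal.rpow_mul, ← ENNReal.rpow_mul]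
        norm_num [mul_comm]

theorem enorm_le_lintegral_enorm_deriv {E : Type*} [NormedAddCommGroup E] [NormedSpace ℝ E]
    [CompleteSpace E] {F F' : ℝ → E} (hF : ∀ t, HasDerivAt F (F' t) t) (hF' : Continuous F')
    {a b θ₀ θ : ℝ} (hθ₀ : θ₀ ∈ Icc a b) (hθ : θ ∈ Icc a b) (h0 : F θ₀ = 0) :
    ‖F θ‖ₑ ≤ ∫⁻ t in Ioo a b, ‖F' t‖ₑ := by
  have hFTC : ∫ t in θ₀..θ, F' t = F θ := by
    rw [intervalIntegral.integral_eq_sub_of_hasDerivAt (fun t _ => hF t)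
      (hF'.intervalIntegrable θ₀ θ), h0, sub_zero]
  have hsub : Ι θ₀ θ ⊆ Ioc a b :=
    Ioc_subset_Ioc (le_min hθ₀.1 hθ.1) (max_le hθ₀.2 hθ.2)
  calc ‖F θ‖ₑ = ‖∫ t in Ι θ₀ θ, F' t‖ₑ := by
        rw [← hFTC, ← ofReal_norm, ← ofReal_norm,
          intervalIntegral.norm_integral_eq_norm_integral_uIoc]
    _ ≤ ∫⁻ t in Ι θ₀ θ, ‖F' t‖ₑ := enorm_integral_le_lintegral_enorm _
    _ ≤ ∫⁻ t in Ioc a b, ‖F' t‖ₑ := lintegral_mono_set hsub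
    _ = ∫⁻ t in Ioo a b, ‖F' t‖ₑ := setLIntegral_congr Ioo_ae_eq_Ioc.symm

theorem enorm_sq_le_circle_energy {E : Type*} [NormedAddCommGroup E] [NormedSpace ℝ E]
    [CompleteSpace E] {w : ℂ → E} (hw : ContDiff ℝ 1 w) (p : ℂ) {s : ℝ} (hs : 0 ≤ s)
    {θ₀ θ : ℝ} (hθ₀ : θ₀ ∈ Icc (-π) π) (hθ : θ ∈ Icc (-π) π) (h0 : w (circleMap p s θ₀) = 0) :
    ‖w (circleMap p s θ)‖ₑ ^ 2 ≤
      ENNReal.ofReal (2 * π * s ^ 2) * ∫⁻ t in Ioo (-π) π, ‖fderiv ℝ w (circleMap p s t)‖ₑ ^ 2 := by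
  set D : ℝ → ℂ →L[ℝ] E := fun t => fderiv ℝ w (circleMap p s t)
  have hD : Continuous D := (hw.continuous_fderiv one_ne_zero).comp (continuous_circleMap p s)
  have hD' : Continuous fun t => D t (circleMap 0 s t * I) :=
    hD.clm_apply ((continuous_circleMap 0 s).mul continuous_const)
  have hderiv : ∀ t, HasDerivAt (fun t => w (circleMap p s t)) (D t (circleMap 0 s t * I)) t :=
    fun t => ((hw.differentiable one_ne_zero _).hasFDerivAt).comp_hasDerivAt t
      (hasDerivAt_circleMap p s t)
  have hspeed : ∀ t, ‖D t (circleMap 0 s t * I)‖ₑ ≤ ‖D t‖ₑ * ENNReal.ofReal s := fun t => by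
    refine ((D t).le_opENorm _).trans_eq ?_
    rw [← ofReal_norm (circleMap 0 s t * I), norm_mul, norm_circleMap_zero, norm_I, mul_one,
      abs_of_nonneg hs]
  have hmeas : AEMeasurable (fun t => ‖D t (circleMap 0 s t * I)‖ₑ)
      (volume.restrict (Ioo (-π) π)) :=
    hD'.enorm.aemeasurable
  calc ‖w (circleMap p s θ)‖ₑ ^ 2
      ≤ (∫⁻ t in Ioo (-π) π, ‖D t (circleMap 0 s t * I)‖ₑ) ^ 2 := by
        gcongr
        exact enorm_le_lintegral_enorm_deriv hderiv hD' hθ₀ hθ h0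
    _ ≤ ENNReal.ofReal (2 * π) * ∫⁻ t in Ioo (-π) π, ‖D t (circleMap 0 s t * I)‖ₑ ^ 2 := by
        refine (lintegral_sq_le_measure_univ_mul _ hmeas).trans_eq ?_
        rw [Measure.restrict_apply_univ, Real.volume_Ioo, sub_neg_eq_add, two_mul]
    _ ≤ ENNReal.ofReal (2 * π) * ∫⁻ t in Ioo (-π) π, ENNReal.ofReal (s ^ 2) * ‖D t‖ₑ ^ 2 := by
        gcongr with t
        rw [ENNReal.ofReal_pow hs, ← mul_pow, mul_comm (ENNReal.ofReal s)]
        gcongr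
        exact hspeed t
    _ = ENNReal.ofReal (2 * π * s ^ 2) * ∫⁻ t in Ioo (-π) π, ‖D t‖ₑ ^ 2 := by
        rw [lintegral_const_mul' _ _ ENNReal.ofReal_ne_top, ← mul_assoc,
          ← ENNReal.ofReal_mul (by positivity)]

theorem ofReal_mul_inv_le_circle_energy {E : Type*} [NormedAddCommGroup E] [NormedSpace ℝ E]
    [CompleteSpace E] {w : ℂ → E} (hw : ContDiff ℝ 1 w) (hsupp : tsupport w ⊆ unitDisk)
    {p : ℂ} (hp : ‖p‖ = 1) {s : ℝ} (hs : 0 < s) {θ : ℝ} (hθ : θ ∈ Icc (-π) π) {δ : ℝ}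
    (hδ : 0 ≤ δ) (hwδ : δ ≤ ‖w (circleMap p s θ)‖) :
    ENNReal.ofReal (δ ^ 2 / (2 * π)) * ENNReal.ofReal s⁻¹ ≤
      ENNReal.ofReal s * ∫⁻ t in Ioo (-π) π, ‖fderiv ℝ w (circleMap p s t)‖ₑ ^ 2 := by
  have hexit : w (circleMap p s p.arg) = 0 := image_eq_zero_of_notMem_tsupport fun hmem => by
    have := hsupp hmem
    rw [unitDisk, mem_ball_zero_iff, norm_circleMap_arg p hs.le, hp] at this
    linarith
  have hbound := enorm_sq_le_circle_energy hw p hs.le ⟨(neg_pi_lt_arg p).le, arg_le_pi p⟩ hθ hexit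
  have hδw : ENNReal.ofReal (δ ^ 2) ≤ ‖w (circleMap p s θ)‖ₑ ^ 2 := by
    rw [← ofReal_norm, ← ENNReal.ofReal_pow (norm_nonneg _)]
    exact ENNReal.ofReal_le_ofReal (pow_le_pow_left₀ hδ hwδ 2)
  calc ENNReal.ofReal (δ ^ 2 / (2 * π)) * ENNReal.ofReal s⁻¹
      = ENNReal.ofReal s * (ENNReal.ofReal (δ ^ 2) / ENNReal.ofReal (2 * π * s ^ 2)) := by
        rw [← ENNReal.ofReal_div_of_pos (by positivity), ← ENNReal.ofReal_mul (by positivity),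
          ← ENNReal.ofReal_mul hs.le]
        congr 1
        field_simp
    _ ≤ _ := by
        gcongr
        exact ENNReal.div_le_of_le_mul' (hδw.trans hbound)

theorem continuous_circleMap_uncurry (p : ℂ) :
    Continuous fun q : ℝ × ℝ => circleMap p q.1 q.2 := by
  simp only [circleMap]
  fun_prop

theorem lintegral_circleMap_eq_lintegral (p : ℂ) {g : ℂ → ℝ≥0∞} (hg : Measurable g) :
    ∫⁻ s in Ioi 0, ENNReal.ofReal s * ∫⁻ θ in Ioo (-π) π, g (circleMap p s θ) = ∫⁻ z, g z := by
  have hpolar : ∀ q : ℝ × ℝ, p + Complex.polarCoord.symm q = circleMap p q.1 q.2 := fun q => by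
    rw [Complex.polarCoord_symm_apply, circleMap, exp_mul_I, ← ofReal_cos, ← ofReal_sin]
  rw [← lintegral_add_left_eq_self g p, ← Complex.lintegral_comp_polarCoord_symm,
    polarCoord_target, Measure.volume_eq_prod, ← Measure.prod_restrict, lintegral_prod]
  · simp only [hpolar, smul_eq_mul]
    exact lintegral_congr fun s => (lintegral_const_mul' _ _ ENNReal.ofReal_ne_top).symm
  · simp only [hpolar]
    exact ((ENNReal.measurable_ofReal.comp measurable_fst).smul
      (hg.comp (continuous_circleMap_uncurry p).measurable)).aemeasurable

theorem ae_ae_circleMap (p : ℂ) {P : ℂ → Prop} (hP : ∀ᵐ z, P z) :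
    ∀ᵐ s ∂volume.restrict (Ioi 0), ∀ᵐ θ ∂volume.restrict (Ioo (-π) π),
      P (circleMap p s θ) := by
  set N := toMeasurable volume {z | ¬ P z}
  have hN : MeasurableSet N := measurableSet_toMeasurable _ _
  have hind : Measurable (N.indicator (1 : ℂ → ℝ≥0∞)) := measurable_one.indicator hN
  have hslice := lintegral_circleMap_eq_lintegral p hind
  rw [lintegral_indicator_one hN, measure_toMeasurable, ae_iff.mp hP] at hslice
  have hmeas : Measurable fun s : ℝ =>
      ENNReal.ofReal s * ∫⁻ θ in Ioo (-π) π, N.indicator 1 (circleMap p s θ) :=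
    measurable_id.ennreal_ofReal.mul
      (hind.comp (continuous_circleMap_uncurry p).measurable).lintegral_prod_right'
  filter_upwards [(lintegral_eq_zero_iff hmeas).mp hslice, ae_restrict_mem measurableSet_Ioi]
    with s hs hs0
  have hzero : ∫⁻ θ in Ioo (-π) π, N.indicator 1 (circleMap p s θ) = 0 := by
    simpa [ENNReal.ofReal_eq_zero, not_le.mpr (show (0 : ℝ) < s from hs0)] using hs
  filter_upwards [(lintegral_eq_zero_iff
    (hind.comp (continuous_circleMap p s).measurable)).mp hzero] with θ hθ
  by_contra hnot
  simp only [Function.comp_apply, Pi.zero_apply, indicator_apply_eq_zero, Pi.one_apply,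
    one_ne_zero, imp_false] at hθ
  exact hθ (subset_toMeasurable volume {z | ¬ P z} hnot)

theorem exists_circleMap_mem_of_ae {V : Set ℂ} (hV : IsOpen V) {p : ℂ} {s : ℝ}
    (hVs : (sphere p s ∩ V).Nonempty) {P : ℝ → Prop}
    (hP : ∀ᵐ θ ∂volume.restrict (Ioo (-π) π), P θ) :
    ∃ θ ∈ Ioo (-π) π, circleMap p s θ ∈ V ∧ P θ := by
  obtain ⟨z, hz, hzV⟩ := hVs
  set O := Ioo (-π) π ∩ circleMap p s ⁻¹' V
  have hOopen : IsOpen O := isOpen_Ioo.inter (hV.preimage (continuous_circleMap p s))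
  -- `O` accumulates at the angle of `z` from the left, even when that angle is `π`
  have hO : O ∈ 𝓝[<] (z - p).arg :=
    inter_mem (mem_of_superset (Ioo_mem_nhdsLT (neg_pi_lt_arg _))
        (Ioo_subset_Ioo_right (arg_le_pi _)))
      (nhdsWithin_le_nhds ((continuous_circleMap p s).continuousAt.preimage_mem_nhds
        (by rw [circleMap_arg_sub_of_mem_sphere hz]; exact hV.mem_nhds hzV)))
  have : (ae (volume.restrict O)).NeBot :=
    ae_restrict_neBot.mpr (hOopen.measure_pos volume (Filter.nonempty_of_mem hO)).ne'
  obtain ⟨θ, hθP, hθO⟩ :=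
    ((ae_restrict_of_ae_restrict_of_subset inter_subset_left hP).and
      (ae_restrict_mem hOopen.measurableSet)).exists
  exact ⟨θ, hθO.1, hθO.2, hθP⟩

theorem lintegral_inv_Ioo_eq_top {r : ℝ} (hr : 0 < r) :
    ∫⁻ s in Ioo 0 r, ENNReal.ofReal s⁻¹ = ⊤ := by
  by_contra hfin
  have hint : IntervalIntegrable (fun s : ℝ => s⁻¹) volume 0 r := by
    rw [intervalIntegrable_iff_integrableOn_Ioo_of_le hr.le]
    refine ⟨measurable_inv.aestronglyMeasurable, ?_⟩
    rw [hasFiniteIntegral_iff_ofReal]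
    · exact lt_top_iff_ne_top.mpr hfin
    · filter_upwards [ae_restrict_mem measurableSet_Ioo] with s hs using inv_nonneg.mpr hs.1.le
  simp [hr.ne] at hint

theorem lintegral_enorm_sq_eq_eLpNorm_sq {α E : Type*} [MeasurableSpace α] [NormedAddCommGroup E]
    (f : α → E) (μ : Measure α) : ∫⁻ x, ‖f x‖ₑ ^ 2 ∂μ = eLpNorm f 2 μ ^ 2 := by
  simpa [ENNReal.rpow_two] using (eLpNorm_nnreal_pow_eq_lintegral (f := f) (μ := μ)
    (p := 2) two_ne_zero).symm

theorem eLpNorm_le_eLpNorm_apply_one_add_eLpNorm_apply_I {α E : Type*} [MeasurableSpace α]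
    [NormedAddCommGroup E] [NormedSpace ℝ E] {μ : Measure α} {p : ℝ≥0∞} (hp : 1 ≤ p)
    {f : α → ℂ →L[ℝ] E} (hf : AEStronglyMeasurable f μ) :
    eLpNorm f p μ ≤ eLpNorm (fun x => f x 1) p μ + eLpNorm (fun x => f x I) p μ := by
  have h1 : AEStronglyMeasurable (fun x => f x 1) μ := hf.apply_continuousLinearMap 1
  have hI : AEStronglyMeasurable (fun x => f x I) μ := hf.apply_continuousLinearMap I
  calc eLpNorm f p μ ≤ eLpNorm (fun x => ‖f x 1‖ + ‖f x I‖) p μ :=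
        eLpNorm_mono_real fun x => (f x).opNorm_le_norm_apply_one_add_norm_apply_I
    _ ≤ eLpNorm (fun x => ‖f x 1‖) p μ + eLpNorm (fun x => ‖f x I‖) p μ :=
        eLpNorm_add_le h1.norm hI.norm hp
    _ = eLpNorm (fun x => f x 1) p μ + eLpNorm (fun x => f x I) p μ := by
        rw [eLpNorm_norm, eLpNorm_norm]

theorem eventually_eLpNorm_le_add_one {α E ι : Type*} [MeasurableSpace α] [NormedAddCommGroup E]
    {μ : Measure α} {p : ℝ≥0∞} (hp : 1 ≤ p) {l : Filter ι} {g : α → E} {f : ι → α → E}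
    (hg : AEStronglyMeasurable g μ) (hf : ∀ i, AEStronglyMeasurable (f i) μ)
    (h : Tendsto (fun i => eLpNorm (fun x => g x - f i x) p μ) l (𝓝 0)) :
    ∀ᶠ i in l, eLpNorm (f i) p μ ≤ eLpNorm g p μ + 1 := by
  filter_upwards [h.eventually_le_const zero_lt_one] with i hi
  calc eLpNorm (f i) p μ = eLpNorm (g - (g - f i)) p μ := by rw [sub_sub_cancel]
    _ ≤ eLpNorm g p μ + eLpNorm (g - f i) p μ := eLpNorm_sub_le hg (hg.sub (hf i)) hp
    _ ≤ eLpNorm g p μ + 1 := by gcongr; exact hi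

theorem MemW120.exists_smooth_seq_tendsto_ae {Ω : Set ℂ} {u : ℂ → ℂ} (hu : MemW120 Ω u) :
    ∃ ψ : ℕ → ℂ → ℂ, (∀ k, ContDiff ℝ 1 (ψ k) ∧ tsupport (ψ k) ⊆ Ω) ∧
      (∀ᵐ z ∂volume.restrict Ω, Tendsto (fun k => ψ k z) atTop (𝓝 (u z))) ∧
      ∃ M < ∞, ∀ᶠ k in atTop, ∫⁻ z, ‖fderiv ℝ (ψ k) z‖ₑ ^ 2 ≤ M := by
  obtain ⟨gx, gy, -, -, hu2, hgx, hgy, φ, hφ, hφu, hφx, hφy⟩ := hu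
  set μ := volume.restrict Ω
  have hφc : ∀ n, Continuous (fderiv ℝ (φ n)) := fun n =>
    (hφ n).1.continuous_fderiv (by simp)
  have hφ_tim : TendstoInMeasure μ φ atTop u := by
    refine tendstoInMeasure_of_tendsto_eLpNorm two_ne_zero
      (fun n => (hφ n).1.continuous.aestronglyMeasurable) hu2.1 ?_
    simp_rw [← eLpNorm_neg (φ _ - u), neg_sub]
    exact hφu
  obtain ⟨ns, hns, hae⟩ := hφ_tim.exists_seq_tendsto_ae
  have hx := eventually_eLpNorm_le_add_one one_le_two hgx.1
    (fun n => ((hφc n).clm_apply continuous_const).aestronglyMeasurable) hφx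
  have hy := eventually_eLpNorm_le_add_one one_le_two hgy.1
    (fun n => ((hφc n).clm_apply continuous_const).aestronglyMeasurable) hφy
  refine ⟨fun k => φ (ns k), fun k => ⟨(hφ (ns k)).1.of_le (by simp), (hφ (ns k)).2.2⟩, hae,
    (eLpNorm gx 2 μ + 1 + (eLpNorm gy 2 μ + 1)) ^ 2, ?_, ?_⟩
  · exact ENNReal.pow_lt_top (by simp [hgx.2, hgy.2])
  filter_upwards [hns.tendsto_atTop.eventually (hx.and hy)] with k ⟨hkx, hky⟩
  have hsupp : Function.support (fun z => ‖fderiv ℝ (φ (ns k)) z‖ₑ ^ 2) ⊆ Ω := fun z hz =>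
    (hφ (ns k)).2.2 (support_fderiv_subset ℝ (by simpa using hz))
  calc ∫⁻ z, ‖fderiv ℝ (φ (ns k)) z‖ₑ ^ 2
      = eLpNorm (fderiv ℝ (φ (ns k))) 2 μ ^ 2 := by
        rw [← setLIntegral_eq_of_support_subset hsupp, lintegral_enorm_sq_eq_eLpNorm_sq]
    _ ≤ (eLpNorm (fun z => fderiv ℝ (φ (ns k)) z 1) 2 μ +
          eLpNorm (fun z => fderiv ℝ (φ (ns k)) z I) 2 μ) ^ 2 := by
        gcongr
        exact eLpNorm_le_eLpNorm_apply_one_add_eLpNorm_apply_I one_le_two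
          (hφc (ns k)).aestronglyMeasurable
    _ ≤ (eLpNorm gx 2 μ + 1 + (eLpNorm gy 2 μ + 1)) ^ 2 := by gcongr

theorem MemW120.exists_sphere_disjoint {u : ℂ → ℂ} (hu : MemW120 unitDisk u) {V : Set ℂ}
    (hV : IsOpen V) (hVD : V ⊆ unitDisk) {δ : ℝ} (hδ : 0 < δ) (huV : ∀ z ∈ V, δ < ‖u z‖)
    {p : ℂ} (hp : ‖p‖ = 1) {r : ℝ} (hr : 0 < r) :
    ∃ s ∈ Ioo 0 r, Disjoint (sphere p s) V := by
  by_contra! hmeet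
  obtain ⟨ψ, hψ, hψu, M, hM, hψM⟩ := hu.exists_smooth_seq_tendsto_ae
  set G : ℕ → ℝ → ℝ≥0∞ := fun k s =>
    ENNReal.ofReal s * ∫⁻ θ in Ioo (-π) π, ‖fderiv ℝ (ψ k) (circleMap p s θ)‖ₑ ^ 2
  have hdens : ∀ k, Measurable fun z => ‖fderiv ℝ (ψ k) z‖ₑ ^ 2 := fun k =>
    ((hψ k).1.continuous_fderiv one_ne_zero).enorm.measurable.pow_const 2
  have hG_meas : ∀ k, Measurable (G k) := fun k =>
    measurable_id.ennreal_ofReal.mul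
      ((hdens k).comp (continuous_circleMap_uncurry p).measurable).lintegral_prod_right'
  have hG_le : ∀ k, ∫⁻ s in Ioo 0 r, G k s ≤ ∫⁻ z, ‖fderiv ℝ (ψ k) z‖ₑ ^ 2 := fun k =>
    (lintegral_mono_set Ioo_subset_Ioi_self).trans_eq
      (lintegral_circleMap_eq_lintegral p (hdens k))
  -- on a.e. circle, `ψ k → u` at a point of `V`, where `|ψ k| > δ` forces energy `≳ δ² / s`
  have hG_ge : ∀ᵐ s ∂volume.restrict (Ioo 0 r),
      ENNReal.ofReal (δ ^ 2 / (2 * π)) * ENNReal.ofReal s⁻¹ ≤ liminf (fun k => G k s) atTop := by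
    have hψu' : ∀ᵐ z, z ∈ unitDisk → Tendsto (fun k => ψ k z) atTop (𝓝 (u z)) :=
      (ae_restrict_iff' measurableSet_ball).mp hψu
    filter_upwards [ae_restrict_of_ae_restrict_of_subset Ioo_subset_Ioi_self
      (ae_ae_circleMap p hψu'), ae_restrict_mem measurableSet_Ioo] with s hs hsr
    obtain ⟨θ, hθ, hθV, hθu⟩ :=
      exists_circleMap_mem_of_ae hV (not_disjoint_iff_nonempty_inter.mp (hmeet s hsr)) hs
    refine le_liminf_of_le (by isBoundedDefault) ?_
    filter_upwards [(hθu (hVD hθV)).norm.eventually (lt_mem_nhds (huV _ hθV))] with k hk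
    exact ofReal_mul_inv_le_circle_energy (hψ k).1 (hψ k).2 hp hsr.1 (Ioo_subset_Icc_self hθ)
      hδ.le hk.le
  have hcalc : ⊤ ≤ M := calc
    ⊤ = ∫⁻ s in Ioo 0 r, ENNReal.ofReal (δ ^ 2 / (2 * π)) * ENNReal.ofReal s⁻¹ := by
        rw [lintegral_const_mul' _ _ ENNReal.ofReal_ne_top, lintegral_inv_Ioo_eq_top hr,
          ENNReal.mul_top (by simp; positivity)]
    _ ≤ ∫⁻ s in Ioo 0 r, liminf (fun k => G k s) atTop := lintegral_mono_ae hG_ge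
    _ ≤ liminf (fun k => ∫⁻ s in Ioo 0 r, G k s) atTop := lintegral_liminf_le hG_meas
    _ ≤ M := liminf_le_of_frequently_le' (hψM.mono fun k hk => (hG_le k).trans hk).frequently
  exact hM.ne (top_le_iff.mp hcalc)

theorem component_closure_in_disk_general
    (h f : ℂ → ℂ)
    (hC : ContinuousOn h unitDisk)
    (hfC : ContinuousOn f (closure unitDisk))
    (hW0 : MemW120 unitDisk (fun z => h z - f z))
    (A : Set ℂ) (hA : closure A ∩ f '' unitCircle = ∅)
    (x : ℂ) (hx : x ∈ unitDisk ∩ h ⁻¹' A) :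
    closure (connectedComponentIn (unitDisk ∩ h ⁻¹' A) x) ⊆ unitDisk := by
  set C := connectedComponentIn (unitDisk ∩ h ⁻¹' A) x
  have hCsub : C ⊆ unitDisk ∩ h ⁻¹' A := connectedComponentIn_subset _ _
  intro p hpC
  by_contra hpD
  have hpD' : p ∈ closure unitDisk := closure_mono (hCsub.trans inter_subset_left) hpC
  have hp : ‖p‖ = 1 := le_antisymm
    (by simpa [unitDisk, closure_ball _ one_ne_zero] using hpD') (by simpa [unitDisk] using hpD)
  have hfp : f p ∉ closure A := fun hfpA =>
    (Set.eq_empty_iff_forall_notMem.mp hA) (f p) ⟨hfpA, p, by simpa [unitCircle] using hp, rfl⟩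
  obtain ⟨δ, hδ, hnear⟩ := eventually_lt_dist_of_notMem_closure (hfC p hpD') hfp
  obtain ⟨r, hr, hr_near⟩ := Metric.mem_nhdsWithin_iff.mp hnear
  set V := unitDisk ∩ {z | δ < ‖h z - f z‖}
  have hV : IsOpen V := (hC.sub (hfC.mono subset_closure)).isOpen_inter_preimage isOpen_ball
    (isOpen_lt continuous_const continuous_norm)
  obtain ⟨s, hs, hsV⟩ := hW0.exists_sphere_disjoint hV inter_subset_left hδ (fun z hz => hz.2)
    hp (lt_min hr (dist_pos.mpr (ne_of_mem_of_not_mem hx.1 hpD)))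
  obtain ⟨z, hzC, hzs⟩ := isPreconnected_connectedComponentIn.inter_sphere_nonempty
    (mem_connectedComponentIn hx) hpC hs.1 (hs.2.le.trans (min_le_right _ _))
  have hzp : z ∈ Metric.ball p r := by
    rw [Metric.mem_ball, Metric.mem_sphere.mp hzs]
    exact hs.2.trans_le (min_le_left _ _)
  have hzV : z ∈ V := ⟨(hCsub hzC).1, by
    simpa [dist_eq_norm] using hr_near ⟨hzp, subset_closure (hCsub hzC).1⟩ (h z) (hCsub hzC).2⟩
  exact hsV.ne_of_mem hzs hzV rfl

/-- If `h ∈ C(𝔻, ℂ) ∩ W^{1,2}(𝔻, ℂ)`, `h - f ∈ W^{1,2}_0(𝔻, ℂ)` for a continuous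
`f : closure 𝔻 → ℂ`, and `closure A ∩ f(𝕊¹) = ∅`, then every connected component of
`h⁻¹(A)` has closure contained in `𝔻`. -/
theorem component_closure_in_disk
    (h f : ℂ → ℂ)
    (hC : ContinuousOn h unitDisk) (hW : MemW12 unitDisk h)
    (hfC : ContinuousOn f (closure unitDisk))
    (hW0 : MemW120 unitDisk (fun z => h z - f z))
    (A : Set ℂ) (hA : closure A ∩ f '' unitCircle = ∅)
    (x : ℂ) (hx : x ∈ unitDisk ∩ h ⁻¹' A) :
    closure (connectedComponentIn (unitDisk ∩ h ⁻¹' A) x) ⊆ unitDisk :=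
  component_closure_in_disk_general h f hC hfC hW0 A hA x hx

end
end

section
/- Let f : 𝔻 → ℂ be a continuous map on the open unit disk, let y ∈ ℂ, and let K and K' be two distinct connected components of f⁻¹{y} with closure(K) ⊂ 𝔻 and closure(K') ⊂ 𝔻. Then there exists r_{K,K'} > 0 such that for every r ∈ (0, r_{K,K'}), the sets K and K' are contained in different connected components of f⁻¹(B²(y, r)). -/
open MeasureTheory Metric Set Filter Topology

noncomputable section

/-!
The component `K` of `x` in the fibre `f⁻¹{y}` is closed (its closure stays in the disk, where
the fibre is relatively closed), hence compact. Over a compact neighbourhood `T` of `K` the fibre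
is compact, and in a compact Hausdorff space a connected component is the intersection of its
clopen neighbourhoods; hence some relatively clopen piece `A ⊇ K` of the fibre over `T` avoids
both `x'` and the boundary of `T`. An open `V ⊇ A` with compact closure, kept away from the rest
of the fibre over `T`, has a frontier missing the fibre, so `|f - y| ≥ r₀ > 0` on `∂V`. For
`r ≤ r₀` the component of `x` in `f⁻¹(B(y, r))` cannot cross `∂V`, so it stays in `V ∌ x'`.
-/

section Topology

variable {X Y : Type*} [TopologicalSpace X] [TopologicalSpace Y]

theorem exists_isClopen_mem_subset_of_connectedComponent_subset [T2Space X] [CompactSpace X]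
    {x : X} {N : Set X} (hN : IsOpen N) (hxN : connectedComponent x ⊆ N) :
    ∃ s, IsClopen s ∧ x ∈ s ∧ s ⊆ N := by
  let ι := {s : Set X // IsClopen s ∧ x ∈ s}
  have : Nonempty ι := ⟨⟨univ, isClopen_univ, mem_univ x⟩⟩
  have hdir : Directed (· ⊇ ·) fun s : ι => s.val := by
    rintro ⟨s, hs, hxs⟩ ⟨t, ht, hxt⟩
    exact ⟨⟨s ∩ t, hs.inter ht, hxs, hxt⟩, inter_subset_left, inter_subset_right⟩
  obtain ⟨⟨s, hs, hxs⟩, hsN⟩ := exists_subset_nhds_of_compactSpace hdir (fun s => s.2.1.1)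
    fun z hz => hN.mem_nhds <| hxN <| (connectedComponent_eq_iInter_isClopen x).symm ▸ hz
  exact ⟨s, hs, hxs, hsN⟩

theorem IsCompact.exists_isCompact_diff_isCompact_of_connectedComponentIn_subset [T2Space X]
    {L N : Set X} {x : X} (hL : IsCompact L) (hN : IsOpen N) (hxL : x ∈ L)
    (hLN : connectedComponentIn L x ⊆ N) :
    ∃ A ⊆ L, x ∈ A ∧ A ⊆ N ∧ IsCompact A ∧ IsCompact (L \ A) := by
  have : CompactSpace L := isCompact_iff_compactSpace.mp hL
  have hcc : connectedComponent (⟨x, hxL⟩ : L) ⊆ (↑) ⁻¹' N := by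
    rw [← image_subset_iff, ← connectedComponentIn_eq_image hxL]
    exact hLN
  obtain ⟨s, hs, hxs, hsN⟩ := exists_isClopen_mem_subset_of_connectedComponent_subset
    (hN.preimage continuous_subtype_val) hcc
  refine ⟨(↑) '' s, Subtype.coe_image_subset L s, mem_image_of_mem _ hxs,
    image_subset_iff.mpr hsN, hs.isClosed.isCompact.image continuous_subtype_val, ?_⟩
  rw [← image_val_compl]
  exact hs.isOpen.isClosed_compl.isCompact.image continuous_subtype_val

theorem IsCompact.exists_isOpen_frontier_disjoint_of_connectedComponentIn_subset
    [T2Space X] [LocallyCompactSpace X] {L N : Set X} {x : X} (hL : IsCompact L)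
    (hN : IsOpen N) (hxL : x ∈ L) (hLN : connectedComponentIn L x ⊆ N) :
    ∃ V, IsOpen V ∧ x ∈ V ∧ IsCompact (closure V) ∧ closure V ⊆ N ∧
      Disjoint (frontier V) L := by
  obtain ⟨A, -, hxA, hAN, hA, hLA⟩ :=
    hL.exists_isCompact_diff_isCompact_of_connectedComponentIn_subset hN hxL hLN
  obtain ⟨V, hV, hAV, hVW, hVc⟩ := exists_open_between_and_isCompact_closure hA
    (hN.sdiff hLA.isClosed) (subset_sdiff.mpr ⟨hAN, disjoint_sdiff_right⟩)
  refine ⟨V, hV, hAV hxA, hVc, hVW.trans sdiff_subset, disjoint_left.mpr fun z hz hzL => ?_⟩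
  have hzA : z ∈ A := by
    by_contra hzA
    exact (hVW (frontier_subset_closure hz)).2 ⟨hzL, hzA⟩
  exact (hV.frontier_eq ▸ hz).2 (hAV hzA)

theorem isClosed_connectedComponentIn_of_closure_subset {S : Set X} {x : X}
    (h : closure (connectedComponentIn S x) ⊆ S) : IsClosed (connectedComponentIn S x) := by
  by_cases hx : x ∈ S
  · exact closure_subset_iff_isClosed.mp <| isPreconnected_connectedComponentIn.closure
      |>.subset_connectedComponentIn (subset_closure (mem_connectedComponentIn hx)) h
  · exact connectedComponentIn_eq_empty hx ▸ isClosed_empty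

theorem isClosed_connectedComponentIn_inter_preimage_singleton [T1Space Y] {f : X → Y}
    {U : Set X} {x : X} {y : Y} (hU : IsOpen U) (hf : ContinuousOn f U)
    (hK : closure (connectedComponentIn (U ∩ f ⁻¹' {y}) x) ⊆ U) :
    IsClosed (connectedComponentIn (U ∩ f ⁻¹' {y}) x) := by
  refine isClosed_connectedComponentIn_of_closure_subset fun z hz => ⟨hK hz, ?_⟩
  have hfz := mem_closure_image (hf.continuousAt (hU.mem_nhds (hK hz))) hz
  refine closure_minimal ?_ isClosed_singleton hfz
  exact image_subset_iff.mpr ((connectedComponentIn_subset _ _).trans inter_subset_right)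

end Topology

section Fibre

variable {X Y : Type*} [TopologicalSpace X] [MetricSpace Y] {f : X → Y} {y : Y}

theorem IsCompact.exists_pos_forall_le_dist {F : Set X} (hF : IsCompact F)
    (hf : ContinuousOn f F) (hy : ∀ z ∈ F, f z ≠ y) : ∃ r₀ > 0, ∀ z ∈ F, r₀ ≤ dist (f z) y := by
  have hy' : y ∈ (f '' F)ᶜ := by rintro ⟨z, hz, rfl⟩; exact hy z hz rfl
  obtain ⟨r₀, hr₀, hball⟩ :=
    Metric.isOpen_iff.mp (hF.image_of_continuousOn hf).isClosed.isOpen_compl y hy'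
  exact ⟨r₀, hr₀, fun z hz => not_lt.mp fun h => hball (mem_ball.mpr h) (mem_image_of_mem f hz)⟩

theorem exists_pos_notMem_connectedComponentIn_preimage_ball [T2Space X] [LocallyCompactSpace X]
    {U : Set X} {x x' : X} (hU : IsOpen U) (hf : ContinuousOn f U) (hx : x ∈ U ∩ f ⁻¹' {y})
    (hK : IsCompact (connectedComponentIn (U ∩ f ⁻¹' {y}) x))
    (hx' : x' ∉ connectedComponentIn (U ∩ f ⁻¹' {y}) x) :
    ∃ r₀ > 0, ∀ r ≤ r₀, x' ∉ connectedComponentIn (U ∩ f ⁻¹' ball y r) x := by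
  set K := connectedComponentIn (U ∩ f ⁻¹' {y}) x
  obtain ⟨T, hT, hKT, hTU⟩ :=
    exists_compact_between hK hU ((connectedComponentIn_subset _ _).trans inter_subset_left)
  have hL : IsCompact (T ∩ f ⁻¹' {y}) := hT.of_isClosed_subset
    ((hf.mono hTU).preimage_isClosed_of_isClosed hT.isClosed isClosed_singleton)
    inter_subset_left
  have hLK : connectedComponentIn (T ∩ f ⁻¹' {y}) x ⊆ K :=
    connectedComponentIn_mono x fun z hz => ⟨hTU hz.1, hz.2⟩
  obtain ⟨V, hV, hxV, hVc, hVN, hVL⟩ :=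
    hL.exists_isOpen_frontier_disjoint_of_connectedComponentIn_subset
      (isOpen_interior.sdiff isClosed_singleton)
      ⟨interior_subset (hKT (mem_connectedComponentIn hx)), hx.2⟩
      fun z hz => ⟨hKT (hLK hz), fun h => hx' (eq_of_mem_singleton h ▸ hLK hz :)⟩
  have hVT : closure V ⊆ T := hVN.trans (sdiff_subset.trans interior_subset)
  have hfr : ∀ z ∈ frontier V, f z ≠ y := fun z hz hfz =>
    disjoint_left.mp hVL hz ⟨hVT (frontier_subset_closure hz), hfz⟩
  obtain ⟨r₀, hr₀, hdist⟩ := (hVc.of_isClosed_subset isClosed_frontier frontier_subset_closure)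
    |>.exists_pos_forall_le_dist (hf.mono (frontier_subset_closure.trans (hVT.trans hTU))) hfr
  refine ⟨r₀, hr₀, fun r hr hx'C => ?_⟩
  have hxC : x ∈ connectedComponentIn (U ∩ f ⁻¹' ball y r) x :=
    mem_connectedComponentIn (connectedComponentIn_nonempty_iff.mp ⟨x', hx'C⟩)
  have hCV : connectedComponentIn (U ∩ f ⁻¹' ball y r) x ⊆ V := by
    refine isPreconnected_connectedComponentIn.subset_of_closure_inter_subset hV ⟨x, hxC, hxV⟩ ?_
    rintro z ⟨hzV, hzC⟩
    by_contra hz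
    have hfz : dist (f z) y < r := ((connectedComponentIn_subset _ _ hzC).2 : f z ∈ ball y r)
    exact (hdist z ⟨hzV, hV.interior_eq.symm ▸ hz⟩).not_gt (hfz.trans_le hr)
  exact (hVN (subset_closure (hCV hx'C))).2 rfl

end Fibre

theorem small_radius_components_separate_general
    (f : ℂ → ℂ) (hf : ContinuousOn f unitDisk) (y : ℂ)
    (x x' : ℂ) (hx : x ∈ unitDisk ∩ f ⁻¹' {y}) (hx' : x' ∈ unitDisk ∩ f ⁻¹' {y})
    (hne : connectedComponentIn (unitDisk ∩ f ⁻¹' {y}) x ≠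
      connectedComponentIn (unitDisk ∩ f ⁻¹' {y}) x')
    (hK : closure (connectedComponentIn (unitDisk ∩ f ⁻¹' {y}) x) ⊆ unitDisk) :
    ∃ r₀ > 0, ∀ r ∈ Set.Ioo (0 : ℝ) r₀,
      connectedComponentIn (unitDisk ∩ f ⁻¹' Metric.ball y r) x ≠
        connectedComponentIn (unitDisk ∩ f ⁻¹' Metric.ball y r) x' := by
  have hD : IsOpen unitDisk := isOpen_ball
  have hKc : IsCompact (connectedComponentIn (unitDisk ∩ f ⁻¹' {y}) x) :=
    isCompact_of_isClosed_isBounded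
      (isClosed_connectedComponentIn_inter_preimage_singleton hD hf hK)
      (isBounded_ball.subset ((connectedComponentIn_subset _ _).trans inter_subset_left))
  have hx'K : x' ∉ connectedComponentIn (unitDisk ∩ f ⁻¹' {y}) x :=
    fun h => hne (connectedComponentIn_eq h)
  obtain ⟨r₀, hr₀, hsep⟩ :=
    exists_pos_notMem_connectedComponentIn_preimage_ball hD hf hx hKc hx'K
  have hfx' : f x' = y := hx'.2
  refine ⟨r₀, hr₀, fun r hr heq => hsep r hr.2.le ?_⟩
  rw [heq]
  exact mem_connectedComponentIn ⟨hx'.1, by simpa [hfx'] using hr.1⟩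

/-- If `K` and `K'` are distinct connected components of `f⁻¹{y}` with closures in
`𝔻`, then for all sufficiently small `r > 0` they lie in different connected
components of `f⁻¹(B²(y,r))`. -/
theorem small_radius_components_separate
    (f : ℂ → ℂ) (hf : ContinuousOn f unitDisk) (y : ℂ)
    (x x' : ℂ) (hx : x ∈ unitDisk ∩ f ⁻¹' {y}) (hx' : x' ∈ unitDisk ∩ f ⁻¹' {y})
    (hne : connectedComponentIn (unitDisk ∩ f ⁻¹' {y}) x ≠
      connectedComponentIn (unitDisk ∩ f ⁻¹' {y}) x')
    (hK : closure (connectedComponentIn (unitDisk ∩ f ⁻¹' {y}) x) ⊆ unitDisk)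
    (hK' : closure (connectedComponentIn (unitDisk ∩ f ⁻¹' {y}) x') ⊆ unitDisk) :
    ∃ r₀ > 0, ∀ r ∈ Set.Ioo (0 : ℝ) r₀,
      connectedComponentIn (unitDisk ∩ f ⁻¹' Metric.ball y r) x ≠
        connectedComponentIn (unitDisk ∩ f ⁻¹' Metric.ball y r) x' :=
  small_radius_components_separate_general f hf y x x' hx hx' hne hK

end
end
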